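/- Consider the nonlinear bifurcating autoregressive model under assumptions (NL), (No) and (Ker), and fix x ∈ ℝ. Then for all n and all r > 0: ℙ(|M_n| > r·|𝕋_n|·h_n) ≤ 2·exp(−r²·|𝕋_n|·h_n² / (2·C_ε·‖K‖²_∞)), where M_n = Σ_{k∈𝕋_n} K((X_k−x)/h_n)·ε_{2k}, C_ε is the T_1 constant of the noise law μ_ε and ‖K‖_∞ = sup|K|. (Indeed E[M_n] = 0 since ε_{2k} is centered and independent of X_k, and the Laplace transform of M_n satisfies E[exp(tM_n)] ≤ exp(t²·C_ε·‖K‖²_∞·|𝕋_n|/2) for all t ∈ ℝ.) -/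

import Mathlib

open MeasureTheory ProbabilityTheory Filter
open scoped ENNReal NNReal Topology Classical

noncomputable section

namespace BMCPaper

/-- A coupling of two measures on `α`. -/
def IsCoupling {α : Type*} [MeasurableSpace α]
    (π : Measure (α × α)) (μ ν : Measure α) : Prop :=
  π.map Prod.fst = μ ∧ π.map Prod.snd = ν

/-- The `L^p`-Wasserstein distance associated with the cost `d`, with values in `ℝ≥0∞`:
`W_p(μ,ν) = inf over couplings π of (∬ d(x,y)^p dπ)^{1/p}`. -/
def W {α : Type*} [MeasurableSpace α] (d : α → α → ℝ) (p : ℝ)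
    (μ ν : Measure α) : ℝ≥0∞ :=
  ⨅ (π : Measure (α × α)) (_ : IsCoupling π μ ν),
    (∫⁻ z, ENNReal.ofReal (d z.1 z.2 ^ p) ∂π) ^ (1 / p)

/-- Relative entropy (Kullback–Leibler divergence) `H(ν|μ)`, with values in `ℝ≥0∞`:
`∫ log (dν/dμ) dν` if `ν ≪ μ` (and the log-density is `ν`-integrable), `∞` otherwise. -/
def relEnt {α : Type*} [MeasurableSpace α] (ν μ : Measure α) : ℝ≥0∞ :=
  if ν ≪ μ ∧ Integrable (fun x => Real.log ((ν.rnDeriv μ x).toReal)) ν then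
    ENNReal.ofReal (∫ x, Real.log ((ν.rnDeriv μ x).toReal) ∂ν)
  else ∞

/-- The transportation cost-information inequality `T_p(C)` for the cost `d`:
`W_p(μ,ν) ≤ √(2 C H(ν|μ))` for every probability measure `ν`. -/
def TCI {α : Type*} [MeasurableSpace α] (d : α → α → ℝ) (p C : ℝ)
    (μ : Measure α) : Prop :=
  ∀ ν : Measure α, IsProbabilityMeasure ν →
    W d p μ ν ≤ (ENNReal.ofReal (2 * C) * relEnt ν μ) ^ (1 / 2 : ℝ)

/-- The `l^p` metric on `E × E` built from a metric `d` on `E`. -/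
def d2 {E : Type*} (d : E → E → ℝ) (p : ℝ) : E × E → E × E → ℝ :=
  fun a b => (d a.1 b.1 ^ p + d a.2 b.2 ^ p) ^ (1 / p)

/-- The `l^1` metric on `E × E × E` built from a metric `d` on `E`. -/
def d3 {E : Type*} (d : E → E → ℝ) : E × E × E → E × E × E → ℝ :=
  fun a b => d a.1 b.1 + d a.2.1 b.2.1 + d a.2.2 b.2.2

/-- The `l^p` metric on `E^N` built from a metric `d` on `E`. -/
def dlp {E : Type*} {N : ℕ} (d : E → E → ℝ) (p : ℝ) :
    (Fin N → E) → (Fin N → E) → ℝ :=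
  fun x y => (∑ i, d (x i) (y i) ^ p) ^ (1 / p)

/-- The `r`-th generation `𝔾_r = {2^r, …, 2^{r+1}-1}` of the binary tree. -/
def gen (r : ℕ) : Finset ℕ := Finset.Ico (2 ^ r) (2 ^ (r + 1))

/-- The first `r+1` generations `𝕋_r = {1, …, 2^{r+1}-1}` of the binary tree. -/
def tree (r : ℕ) : Finset ℕ := Finset.Icc 1 (2 ^ (r + 1) - 1)

/-- The σ-algebra generated by `(X_i, i ∈ 𝕋_r)`. -/
def treeSig {Ω E : Type*} [MeasurableSpace E] (X : ℕ → Ω → E) (r : ℕ) :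
    MeasurableSpace Ω :=
  ⨆ i ∈ tree r, MeasurableSpace.comap (X i) inferInstance

/-- `(X_n)_{n ≥ 1}` is a bifurcating Markov chain on `E` under `Pr`, with initial law `ν`
and `𝕋`-transition probability `P` : `X_1 ∼ ν` and, for every generation `r` and every
family of bounded measurable `f_n`,
`E[∏_{n ∈ 𝔾_r} f_n(X_n, X_{2n}, X_{2n+1}) | σ(X_i, i ∈ 𝕋_r)] = ∏_{n ∈ 𝔾_r} (P f_n)(X_n)`. -/
structure IsBMC {Ω E : Type*} [MeasurableSpace Ω] [MeasurableSpace E]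
    (Pr : Measure Ω) (X : ℕ → Ω → E) (ν : Measure E)
    (P : Kernel E (E × E)) : Prop where
  isProb : IsProbabilityMeasure Pr
  isMarkov : IsMarkovKernel P
  meas : ∀ n, Measurable (X n)
  init : Pr.map (X 1) = ν
  branch : ∀ (r : ℕ) (f : ℕ → E × E × E → ℝ),
    (∀ n, Measurable (f n)) → (∀ n, ∃ M, ∀ y, |f n y| ≤ M) →
    (Pr[fun ω => ∏ n ∈ gen r, f n (X n ω, X (2 * n) ω, X (2 * n + 1) ω) | treeSig X r]
      =ᵐ[Pr] fun ω => ∏ n ∈ gen r, ∫ yz, f n (X n ω, yz.1, yz.2) ∂(P (X n ω)))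

/-- The Gaussian concentration property `GC(κ)` for a real random variable `Z`:
`E[exp(t(Z − E Z))] ≤ exp(κ t² / 2)` for every `t ∈ ℝ`. -/
def GC {Ω : Type*} [MeasurableSpace Ω] (Pr : Measure Ω) (Z : Ω → ℝ) (κ : ℝ) : Prop :=
  ∀ t : ℝ, ∫ ω, Real.exp (t * (Z ω - ∫ ω', Z ω' ∂Pr)) ∂Pr ≤ Real.exp (κ * t ^ 2 / 2)

end BMCPaper

open BMCPaper



/-- The `𝕋`-transition probability of the nonlinear bifurcating autoregressive model:
`P(x, ·)` is the law of `(f₀(x) + ε, f₁(x) + ε')` with `ε, ε'` i.i.d. of law `με`. -/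
def nbarKernel (f0 f1 : ℝ → ℝ) (με : Measure ℝ) [IsProbabilityMeasure με] :
    Kernel ℝ (ℝ × ℝ) :=
  Kernel.map ((Kernel.id : Kernel ℝ ℝ) ×ₖ Kernel.const ℝ (με.prod με))
    (fun p => (f0 p.1 + p.2.1, f1 p.1 + p.2.2))

-- ===== auxiliary =====
namespace NBARAux

/-- clamp to [-N, N] -/
def clampR (N : ℕ) (e : ℝ) : ℝ := max (-(N:ℝ)) (min e (N:ℝ))

lemma clampR_abs_le (N : ℕ) (e : ℝ) : |clampR N e| ≤ (N:ℝ) := by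
  rw [abs_le]
  constructor
  · exact le_max_left _ _
  · refine max_le (by simpa using Nat.cast_nonneg (R := ℝ) N) (min_le_right _ _)

lemma clampR_lip (N : ℕ) (a b : ℝ) : |clampR N a - clampR N b| ≤ |a - b| := by
  unfold clampR
  rw [max_comm (-(N:ℝ)) (min a (N:ℝ)), max_comm (-(N:ℝ)) (min b (N:ℝ))]
  refine (abs_max_sub_max_le_abs _ _ _).trans ?_
  have := abs_min_sub_min_le_max a (N:ℝ) b (N:ℝ)
  simpa using this

lemma clampR_eventually_eq (e : ℝ) : ∀ᶠ N : ℕ in atTop, clampR N e = e := by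
  filter_upwards [eventually_ge_atTop (Nat.ceil |e|)] with N hN
  have h1 : |e| ≤ (N:ℝ) := le_trans (Nat.le_ceil _) (by exact_mod_cast hN)
  rw [abs_le] at h1
  unfold clampR
  rw [min_eq_left h1.2, max_eq_right h1.1]

lemma clampR_tendsto (e : ℝ) : Tendsto (fun N : ℕ => clampR N e) atTop (𝓝 e) := by
  refine Tendsto.congr' ?_ tendsto_const_nhds
  filter_upwards [clampR_eventually_eq e] with N hN using hN.symm

lemma clampR_abs_le_abs (N : ℕ) (e : ℝ) : |clampR N e| ≤ |e| := by
  have := clampR_lip N e 0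
  have h0 : clampR N 0 = 0 := by
    unfold clampR
    rw [min_eq_left (by positivity), max_eq_right (by simpa using neg_nonpos_of_nonneg (Nat.cast_nonneg N))]
  simp [h0] at this; simpa using this

lemma clampR_measurable (N : ℕ) : Measurable (clampR N) := by
  unfold clampR; fun_prop

lemma integrable_of_bounded' {α : Type*} [MeasurableSpace α] {μ : Measure α} [IsFiniteMeasure μ]
    {f : α → ℝ} (hf : AEStronglyMeasurable f μ) (c : ℝ) (h : ∀ x, |f x| ≤ c) :
    Integrable f μ :=
  ⟨hf, HasFiniteIntegral.of_bounded (C := c) (Eventually.of_forall (by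
    simpa [Real.norm_eq_abs] using h))⟩

end NBARAux
-- GC lemma: appended to aux1 content for testing
namespace NBARAux

lemma lipschitz_continuous {G : ℝ → ℝ} {L : ℝ} (hL : 0 ≤ L)
    (hGlip : ∀ a b, |G a - G b| ≤ L * |a - b|) : Continuous G := by
  have : LipschitzWith L.toNNReal G := by
    refine LipschitzWith.of_dist_le_mul fun x y => ?_
    rw [Real.dist_eq, Real.dist_eq, Real.coe_toNNReal L hL]
    exact hGlip x y
  exact this.continuous

/-- Gaussian concentration (Bobkov–Götze easy direction) for bounded Lipschitz functions. -/
lemma gc_of_tci (μ : Measure ℝ) [IsProbabilityMeasure μ] (C : ℝ) (hC : 0 < C)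
    (hT : TCI (fun a b : ℝ => |a - b|) 1 C μ)
    (G : ℝ → ℝ) (L Gb : ℝ) (hL : 0 ≤ L)
    (hGlip : ∀ a b, |G a - G b| ≤ L * |a - b|) (hGb : ∀ x, |G x| ≤ Gb) :
    ∫ x, Real.exp (G x) ∂μ ≤ Real.exp ((∫ x, G x ∂μ) + L ^ 2 * C / 2) := by
  have hGcont : Continuous G := lipschitz_continuous hL hGlip
  have hGmeas : Measurable G := hGcont.measurable
  have hGb0 : 0 ≤ Gb := le_trans (abs_nonneg _) (hGb 0)
  have hGint : Integrable G μ :=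
    integrable_of_bounded' hGmeas.aestronglyMeasurable Gb hGb
  have hexpint : Integrable (fun x => Real.exp (G x)) μ :=
    integrable_of_bounded' (hGmeas.exp).aestronglyMeasurable (Real.exp Gb)
      (fun x => by
        rw [abs_of_pos (Real.exp_pos _)]
        exact Real.exp_le_exp.2 ((abs_le.1 (hGb x)).2))
  set Z : ℝ := ∫ x, Real.exp (G x) ∂μ with hZ
  have hZpos : 0 < Z := by
    have h1 : Real.exp (-Gb) ≤ Z := by
      rw [hZ]
      have := integral_mono (integrable_const (Real.exp (-Gb))) hexpint
        (fun x => Real.exp_le_exp.2 (neg_le_of_abs_le (hGb x)))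
      simpa using this
    exact lt_of_lt_of_le (Real.exp_pos _) h1
  -- the tilted measure
  set dens : ℝ → ℝ≥0∞ := fun x => ENNReal.ofReal (Real.exp (G x) / Z) with hdensdef
  have hdensmeas : Measurable dens := (hGmeas.exp.div_const Z).ennreal_ofReal
  set ν : Measure ℝ := μ.withDensity dens with hν
  have hdivint : Integrable (fun x => Real.exp (G x) / Z) μ := hexpint.div_const Z
  have hdivnn : 0 ≤ᵐ[μ] fun x => Real.exp (G x) / Z :=
    Eventually.of_forall fun x => div_nonneg (Real.exp_pos _).le hZpos.le
  have hνuniv : ν Set.univ = 1 := by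
    rw [hν, withDensity_apply _ MeasurableSet.univ, setLIntegral_univ, hdensdef]
    rw [← ofReal_integral_eq_lintegral_ofReal hdivint hdivnn]
    rw [integral_div, ← hZ, div_self hZpos.ne']
    simp
  have hνprob : IsProbabilityMeasure ν := ⟨hνuniv⟩
  have hac : ν ≪ μ := withDensity_absolutelyContinuous _ _
  have hrd : ν.rnDeriv μ =ᵐ[μ] dens := Measure.rnDeriv_withDensity μ hdensmeas
  have hlog_mu : (fun x => Real.log ((ν.rnDeriv μ x).toReal))
      =ᵐ[μ] fun x => G x - Real.log Z := by
    filter_upwards [hrd] with x hx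
    rw [hx, hdensdef, ENNReal.toReal_ofReal (div_nonneg (Real.exp_pos _).le hZpos.le),
      Real.log_div (Real.exp_pos _).ne' hZpos.ne', Real.log_exp]
  have hlog_nu : (fun x => Real.log ((ν.rnDeriv μ x).toReal))
      =ᵐ[ν] fun x => G x - Real.log Z := hac.ae_eq hlog_mu
  -- integrability of log-density under ν
  haveI := hνprob
  have hGsubint : Integrable (fun x => G x - Real.log Z) ν :=
    integrable_of_bounded' ((hGmeas.sub measurable_const)).aestronglyMeasurable
      (Gb + |Real.log Z|)
      (fun x => (abs_sub _ _).trans (add_le_add (hGb x) le_rfl))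
  have hlogint : Integrable (fun x => Real.log ((ν.rnDeriv μ x).toReal)) ν :=
    hGsubint.congr hlog_nu.symm
  set Hr : ℝ := ∫ x, (G x - Real.log Z) ∂ν with hHr
  have hrelEnt : relEnt ν μ = ENNReal.ofReal Hr := by
    rw [relEnt, if_pos ⟨hac, hlogint⟩]
    congr 1
    exact integral_congr_ae hlog_nu
  -- transfer ν-integrals to μ-integrals
  have hdens_nn : Measurable fun x => Real.toNNReal (Real.exp (G x) / Z) :=
    (hGmeas.exp.div_const Z).real_toNNReal
  have hν_int : ∀ φ : ℝ → ℝ, ∫ x, φ x ∂ν = ∫ x, (Real.exp (G x) / Z) * φ x ∂μ := by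
    intro φ
    have : ν = μ.withDensity fun x => ((Real.toNNReal (Real.exp (G x) / Z) : ℝ≥0) : ℝ≥0∞) := by
      rw [hν]; congr 1
    rw [this, integral_withDensity_eq_integral_smul hdens_nn φ]
    congr 1
    ext x
    rw [NNReal.smul_def, smul_eq_mul, Real.coe_toNNReal _ (div_nonneg (Real.exp_pos _).le hZpos.le)]
  -- Hr ≥ 0
  have hu_pos : ∀ x, 0 < Real.exp (G x) / Z := fun x => div_pos (Real.exp_pos _) hZpos
  have hu_bdd : ∀ x, Real.exp (G x) / Z ≤ Real.exp Gb / Z := fun x =>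
    (div_le_div_iff_of_pos_right hZpos).mpr (Real.exp_le_exp.2 ((abs_le.1 (hGb x)).2))
  have hu_lb : ∀ x, Real.exp (-Gb) / Z ≤ Real.exp (G x) / Z := fun x =>
    (div_le_div_iff_of_pos_right hZpos).mpr (Real.exp_le_exp.2 (neg_le_of_abs_le (hGb x)))
  have hlogu : ∀ x, Real.log (Real.exp (G x) / Z) = G x - Real.log Z := fun x => by
    rw [Real.log_div (Real.exp_pos _).ne' hZpos.ne', Real.log_exp]
  have hHrrw : Hr = ∫ x, (Real.exp (G x) / Z) * (G x - Real.log Z) ∂μ := by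
    rw [hHr, hν_int]
  have hHr0 : 0 ≤ Hr := by
    rw [hHrrw]
    have hint1 : Integrable (fun x => Real.exp (G x) / Z - 1) μ :=
      hdivint.sub (integrable_const 1)
    have hint2 : Integrable (fun x => (Real.exp (G x) / Z) * (G x - Real.log Z)) μ := by
      refine integrable_of_bounded' ?_ ((Real.exp Gb / Z) * (Gb + |Real.log Z|)) ?_
      · exact ((hGmeas.exp.div_const Z).mul (hGmeas.sub measurable_const)).aestronglyMeasurable
      · intro x
        rw [abs_mul]
        refine mul_le_mul ?_ ((abs_sub _ _).trans (add_le_add (hGb x) le_rfl)) (abs_nonneg _)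
          (div_nonneg (Real.exp_pos _).le hZpos.le)
        rw [abs_of_pos (hu_pos x)]
        exact hu_bdd x
    have hptwise : ∀ x, Real.exp (G x) / Z - 1 ≤ (Real.exp (G x) / Z) * (G x - Real.log Z) := by
      intro x
      set u := Real.exp (G x) / Z with hu
      have hupos := hu_pos x
      have hlog := Real.log_le_sub_one_of_pos (inv_pos.2 hupos)
      rw [Real.log_inv] at hlog
      have : 1 - u⁻¹ ≤ Real.log u := by linarith
      have := mul_le_mul_of_nonneg_left this hupos.le
      rw [mul_sub, mul_inv_cancel₀ hupos.ne', mul_one] at this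
      calc u - 1 ≤ u * Real.log u := this
        _ = u * (G x - Real.log Z) := by rw [hu, hlogu x]
    have h0 : ∫ x, (Real.exp (G x) / Z - 1) ∂μ = 0 := by
      rw [integral_sub hdivint (integrable_const 1), integral_div, ← hZ,
        div_self hZpos.ne']
      simp
    calc (0:ℝ) = ∫ x, (Real.exp (G x) / Z - 1) ∂μ := h0.symm
      _ ≤ _ := integral_mono hint1 hint2 hptwise
  -- Kantorovich duality estimate
  have hGint_ν : Integrable G ν := integrable_of_bounded' hGmeas.aestronglyMeasurable Gb hGb
  set Δ : ℝ := (∫ x, G x ∂ν) - ∫ x, G x ∂μ with hΔdef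
  have hKant : Δ ≤ L * Real.sqrt (2 * C * Hr) := by
    rcases eq_or_lt_of_le hL with hL0 | hLpos
    · -- G is constant
      have hconst : ∀ a, G a = G 0 := fun a => by
        have h := hGlip a 0
        rw [← hL0, zero_mul] at h
        have h2 : |G a - G 0| = 0 := le_antisymm h (abs_nonneg _)
        have h3 : G a - G 0 = 0 := abs_eq_zero.mp h2
        linarith
      have h1 : ∫ x, G x ∂ν = G 0 := by
        rw [integral_congr_ae (Eventually.of_forall hconst)]; simp
      have h2 : ∫ x, G x ∂μ = G 0 := by
        rw [integral_congr_ae (Eventually.of_forall hconst)]; simp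
      rw [hΔdef, h1, h2, sub_self, ← hL0, zero_mul]
    · have hW := hT ν hνprob
      have hWrhs : (ENNReal.ofReal (2 * C) * relEnt ν μ) ^ (1 / 2 : ℝ)
          = ENNReal.ofReal (Real.sqrt (2 * C * Hr)) := by
        rw [hrelEnt, ← ENNReal.ofReal_mul (by positivity),
          ENNReal.ofReal_rpow_of_nonneg (by positivity) (by norm_num),
          Real.sqrt_eq_rpow]
      have key : ∀ π : Measure (ℝ × ℝ), IsCoupling π μ ν →
          ENNReal.ofReal Δ ≤ ENNReal.ofReal L *
            (∫⁻ z, ENNReal.ofReal (|z.1 - z.2| ^ (1:ℝ)) ∂π) ^ ((1:ℝ) / 1) := by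
        intro π hπ
        have hπuniv : π Set.univ = 1 := by
          have h := congrArg (fun m : Measure ℝ => m Set.univ) hπ.1
          simp only [Measure.map_apply measurable_fst MeasurableSet.univ,
            Set.preimage_univ] at h
          rw [h, measure_univ]
        haveI : IsProbabilityMeasure π := ⟨hπuniv⟩
        have h1 : ∫ x, G x ∂μ = ∫ z : ℝ × ℝ, G z.1 ∂π := by
          rw [← hπ.1, integral_map measurable_fst.aemeasurable
            hGmeas.aestronglyMeasurable]
        have h2 : ∫ x, G x ∂ν = ∫ z : ℝ × ℝ, G z.2 ∂π := by
          rw [← hπ.2, integral_map measurable_snd.aemeasurable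
            hGmeas.aestronglyMeasurable]
        have hint1 : Integrable (fun z : ℝ × ℝ => G z.1) π :=
          integrable_of_bounded' (hGmeas.comp measurable_fst).aestronglyMeasurable Gb
            (fun z => hGb _)
        have hint2 : Integrable (fun z : ℝ × ℝ => G z.2) π :=
          integrable_of_bounded' (hGmeas.comp measurable_snd).aestronglyMeasurable Gb
            (fun z => hGb _)
        have hminmeas : Measurable fun z : ℝ × ℝ => min (2 * Gb) (L * |z.1 - z.2|) := by
          fun_prop
        have hminnn : ∀ z : ℝ × ℝ, 0 ≤ min (2 * Gb) (L * |z.1 - z.2|) := fun z =>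
          le_min (by positivity) (by positivity)
        have hIint : Integrable (fun z : ℝ × ℝ => min (2 * Gb) (L * |z.1 - z.2|)) π :=
          integrable_of_bounded' hminmeas.aestronglyMeasurable (2 * Gb)
            (fun z => by rw [abs_of_nonneg (hminnn z)]; exact min_le_left _ _)
        have hΔI : Δ ≤ ∫ z : ℝ × ℝ, min (2 * Gb) (L * |z.1 - z.2|) ∂π := by
          rw [hΔdef, h1, h2, ← integral_sub hint2 hint1]
          refine integral_mono (hint2.sub hint1) hIint fun z => ?_
          refine le_min ?_ ?_
          · calc G z.2 - G z.1 ≤ |G z.2 - G z.1| := le_abs_self _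
              _ ≤ Gb + Gb := (abs_sub _ _).trans (add_le_add (hGb _) (hGb _))
              _ = 2 * Gb := by ring
          · calc G z.2 - G z.1 ≤ |G z.2 - G z.1| := le_abs_self _
              _ ≤ L * |z.2 - z.1| := hGlip _ _
              _ = L * |z.1 - z.2| := by rw [abs_sub_comm]
        calc ENNReal.ofReal Δ
            ≤ ENNReal.ofReal (∫ z : ℝ × ℝ, min (2 * Gb) (L * |z.1 - z.2|) ∂π) :=
              ENNReal.ofReal_le_ofReal hΔI
          _ = ∫⁻ z : ℝ × ℝ, ENNReal.ofReal (min (2 * Gb) (L * |z.1 - z.2|)) ∂π :=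
              ofReal_integral_eq_lintegral_ofReal hIint (Eventually.of_forall hminnn)
          _ ≤ ∫⁻ z : ℝ × ℝ, ENNReal.ofReal (L * |z.1 - z.2|) ∂π :=
              lintegral_mono fun z => ENNReal.ofReal_le_ofReal (min_le_right _ _)
          _ = ENNReal.ofReal L * ∫⁻ z : ℝ × ℝ, ENNReal.ofReal (|z.1 - z.2| ^ (1:ℝ)) ∂π := by
              simp_rw [Real.rpow_one, ENNReal.ofReal_mul hL]
              rw [lintegral_const_mul _ (f := fun z : ℝ × ℝ => ENNReal.ofReal |z.1 - z.2|) (by fun_prop)]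
          _ = _ := by rw [div_one, ENNReal.rpow_one]
      have hL0' : ENNReal.ofReal L ≠ 0 := by
        simp [ENNReal.ofReal_eq_zero]; linarith
      have hLtop : ENNReal.ofReal L ≠ ⊤ := ENNReal.ofReal_ne_top
      have hdiv : ENNReal.ofReal Δ / ENNReal.ofReal L ≤ W (fun a b : ℝ => |a - b|) 1 μ ν := by
        rw [W]
        refine le_iInf₂ fun π hπ => ?_
        rw [ENNReal.div_le_iff_le_mul (Or.inl hL0') (Or.inl hLtop), mul_comm]
        exact key π hπ
      have hfinal : ENNReal.ofReal Δ ≤ ENNReal.ofReal (L * Real.sqrt (2 * C * Hr)) := by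
        have h3 := hdiv.trans (hW.trans_eq hWrhs)
        rw [ENNReal.div_le_iff_le_mul (Or.inl hL0') (Or.inl hLtop)] at h3
        rw [ENNReal.ofReal_mul hL]
        rw [mul_comm] at h3
        exact h3.trans_eq rfl
      exact (ENNReal.ofReal_le_ofReal_iff (by positivity)).mp hfinal
  -- conclusion
  have hHrsplit : Hr = (∫ x, G x ∂ν) - Real.log Z := by
    rw [hHr, integral_sub hGint_ν (integrable_const _), integral_const]
    simp
  have hAM : L * Real.sqrt (2 * C * Hr) ≤ L ^ 2 * C / 2 + Hr := by
    set s := Real.sqrt (2 * C * Hr) with hs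
    have hs0 : 0 ≤ s := Real.sqrt_nonneg _
    have hs2 : s ^ 2 = 2 * C * Hr := Real.sq_sqrt (by positivity)
    nlinarith [sq_nonneg (L * C - s), hC, hs0, mul_pos hC (mul_pos hC hC)]
  have hlogZ : Real.log Z ≤ (∫ x, G x ∂μ) + L ^ 2 * C / 2 := by
    have : Real.log Z = (∫ x, G x ∂ν) - Hr := by rw [hHrsplit]; ring
    rw [this]
    have : (∫ x, G x ∂ν) ≤ (∫ x, G x ∂μ) + Δ := by rw [hΔdef]; ring_nf; exact le_rfl
    nlinarith [hKant, hAM]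
  calc Z = Real.exp (Real.log Z) := (Real.exp_log hZpos).symm
    _ ≤ _ := Real.exp_le_exp.2 hlogZ

end NBARAux
namespace NBARAux

/-- T₁ implies integrability of the identity. -/
lemma integrable_id_of_tci (μ : Measure ℝ) [IsProbabilityMeasure μ] (C : ℝ) (hC : 0 < C)
    (hT : TCI (fun a b : ℝ => |a - b|) 1 C μ) : Integrable (fun x : ℝ => x) μ := by
  set r : ℝ := C / 2 + 1 with hr
  set a : ℕ → ℝ := fun N => ∫ x, min |x| (N:ℝ) ∂μ with ha
  have hminmeas : ∀ N : ℕ, Measurable fun x : ℝ => min |x| (N:ℝ) := fun N => by fun_prop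
  have hminnn : ∀ (N : ℕ) (x : ℝ), 0 ≤ min |x| (N:ℝ) := fun N x =>
    le_min (abs_nonneg _) (Nat.cast_nonneg _)
  have hminint : ∀ N : ℕ, Integrable (fun x : ℝ => min |x| (N:ℝ)) μ := fun N =>
    integrable_of_bounded' (hminmeas N).aestronglyMeasurable (N:ℝ)
      (fun x => by rw [abs_of_nonneg (hminnn N x)]; exact min_le_right _ _)
  -- Markov via GC
  have hmarkov : ∀ N : ℕ, (μ {x : ℝ | |x| ≤ a N - r}).toReal ≤ Real.exp (-1) := by
    intro N
    have hgc := gc_of_tci μ C hC hT (fun x => -(min |x| (N:ℝ))) 1 (N:ℝ) zero_le_one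
      (fun x y => by
        rw [neg_sub_neg, abs_sub_comm, one_mul]
        exact (abs_min_sub_min_le_max _ _ _ _).trans
          (by simpa using abs_abs_sub_abs_le_abs_sub x y)) 
      (fun x => by rw [abs_neg, abs_of_nonneg (hminnn N x)]; exact min_le_right _ _)
    have hintneg : ∫ x, -(min |x| (N:ℝ)) ∂μ = -(a N) := by
      rw [integral_neg, ha]
    rw [hintneg, one_pow, one_mul] at hgc
    have hexpint : Integrable (fun x : ℝ => Real.exp (-(min |x| (N:ℝ)))) μ :=
      integrable_of_bounded' ((hminmeas N).neg.exp).aestronglyMeasurable 1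
        (fun x => by
          rw [abs_of_pos (Real.exp_pos _), ← Real.exp_zero]
          exact Real.exp_le_exp.2 (by simpa using hminnn N x))
    have hset : MeasurableSet {x : ℝ | |x| ≤ a N - r} :=
      measurableSet_le (by fun_prop) measurable_const
    have hlow : Real.exp (r - a N) * (μ {x : ℝ | |x| ≤ a N - r}).toReal
        ≤ ∫ x, Real.exp (-(min |x| (N:ℝ))) ∂μ := by
      have h1 : ∫ x in {x : ℝ | |x| ≤ a N - r}, Real.exp (r - a N) ∂μ
          ≤ ∫ x in {x : ℝ | |x| ≤ a N - r}, Real.exp (-(min |x| (N:ℝ))) ∂μ := by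
        refine setIntegral_mono_on (integrableOn_const (measure_ne_top _ _) enorm_ne_top)
          (hexpint.integrableOn) hset fun x hx => ?_
        refine Real.exp_le_exp.2 ?_
        have hxle : |x| ≤ a N - r := hx
        have : min |x| (N:ℝ) ≤ a N - r := le_trans (min_le_left _ _) hxle
        linarith
      have h2 : ∫ x in {x : ℝ | |x| ≤ a N - r}, Real.exp (r - a N) ∂μ
          = Real.exp (r - a N) * (μ {x : ℝ | |x| ≤ a N - r}).toReal := by
        rw [setIntegral_const, smul_eq_mul, mul_comm]
        rfl
      have h3 : ∫ x in {x : ℝ | |x| ≤ a N - r}, Real.exp (-(min |x| (N:ℝ))) ∂μ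
          ≤ ∫ x, Real.exp (-(min |x| (N:ℝ))) ∂μ :=
        setIntegral_le_integral hexpint (Eventually.of_forall fun x => (Real.exp_pos _).le)
      linarith
    have hchain := hlow.trans hgc
    -- exp (r - a N) * meas ≤ exp (-a N + C/2)  implies  meas ≤ exp (C/2 - r) = exp (-1)
    have hpos := Real.exp_pos (r - a N)
    rw [← le_div_iff₀' hpos] at hchain
    refine hchain.trans ?_
    rw [← Real.exp_sub]
    refine le_of_eq ?_
    congr 1
    rw [hr]; ring
  -- a is bounded
  obtain ⟨j₀, hj₀⟩ : ∃ j₀ : ℕ, ENNReal.ofReal (Real.exp (-1)) < μ {x : ℝ | |x| ≤ (j₀:ℝ)} := by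
    have hmono : Monotone fun j : ℕ => {x : ℝ | |x| ≤ (j:ℝ)} := by
      intro i j hij x hx
      simp only [Set.mem_setOf_eq] at hx ⊢
      exact le_trans hx (by exact_mod_cast hij)
    have hunion : (⋃ j : ℕ, {x : ℝ | |x| ≤ (j:ℝ)}) = Set.univ := by
      ext x
      simp only [Set.mem_iUnion, Set.mem_setOf_eq, Set.mem_univ, iff_true]
      obtain ⟨j, hj⟩ := exists_nat_ge |x|
      exact ⟨j, hj⟩
    have htend := tendsto_measure_iUnion_atTop (μ := μ) hmono
    rw [hunion, measure_univ] at htend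
    have hlt : ENNReal.ofReal (Real.exp (-1)) < 1 := by
      rw [← ENNReal.ofReal_one]
      exact ENNReal.ofReal_lt_ofReal_iff_of_nonneg (Real.exp_pos _).le |>.mpr
        (by rw [← Real.exp_zero]; exact Real.exp_lt_exp.2 (by norm_num))
    exact ((htend.eventually_const_lt hlt).exists)
  have habd : ∀ N : ℕ, a N ≤ (j₀:ℝ) + r := by
    intro N
    by_contra hcon
    push_neg at hcon
    have hsub : {x : ℝ | |x| ≤ (j₀:ℝ)} ⊆ {x : ℝ | |x| ≤ a N - r} := by
      intro x hx
      simp only [Set.mem_setOf_eq] at hx ⊢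
      linarith
    have h1 : μ {x : ℝ | |x| ≤ (j₀:ℝ)} ≤ μ {x : ℝ | |x| ≤ a N - r} := measure_mono hsub
    have h2 : μ {x : ℝ | |x| ≤ a N - r} ≤ ENNReal.ofReal (Real.exp (-1)) := by
      rw [ENNReal.le_ofReal_iff_toReal_le (measure_ne_top _ _) (Real.exp_pos _).le]
      exact hmarkov N
    exact absurd (h1.trans h2) (not_le.mpr hj₀)
  -- conclude integrability
  refine ⟨measurable_id.aestronglyMeasurable, ?_⟩
  rw [hasFiniteIntegral_iff_norm]
  have hrw : ∀ x : ℝ, ENNReal.ofReal ‖x‖ = ENNReal.ofReal |x| := fun x => by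
    rw [Real.norm_eq_abs]
  simp_rw [hrw]
  have hsup : ∀ x : ℝ, ENNReal.ofReal |x| = ⨆ N : ℕ, ENNReal.ofReal (min |x| (N:ℝ)) := by
    intro x
    refine le_antisymm ?_ (iSup_le fun N => ENNReal.ofReal_le_ofReal (min_le_left _ _))
    refine le_iSup_of_le (Nat.ceil |x|) ?_
    rw [min_eq_left (Nat.le_ceil _)]
  have hmct : ∫⁻ x, ENNReal.ofReal |x| ∂μ
      = ⨆ N : ℕ, ∫⁻ x, ENNReal.ofReal (min |x| (N:ℝ)) ∂μ := by
    rw [← lintegral_iSup (fun N => (hminmeas N).ennreal_ofReal)]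
    · exact lintegral_congr fun x => hsup x
    · intro i j hij x
      exact ENNReal.ofReal_le_ofReal (le_min (min_le_left _ _)
        ((min_le_right _ _).trans (by exact_mod_cast hij)))
  rw [hmct]
  refine lt_of_le_of_lt (iSup_le (a := ENNReal.ofReal ((j₀:ℝ) + r)) fun N => ?_)
    ENNReal.ofReal_lt_top
  rw [← ofReal_integral_eq_lintegral_ofReal (hminint N) (Eventually.of_forall (hminnn N))]
  exact ENNReal.ofReal_le_ofReal (habd N)

/-- means of clamps tend to the (zero) mean. -/
lemma mean_clamp_tendsto (μ : Measure ℝ) [IsProbabilityMeasure μ]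
    (hint : Integrable (fun x : ℝ => x) μ) (hcent : ∫ x, x ∂μ = 0) :
    Tendsto (fun N : ℕ => ∫ e, clampR N e ∂μ) atTop (𝓝 0) := by
  have h := tendsto_integral_of_dominated_convergence (F := fun N e => clampR N e)
    (f := fun e : ℝ => e) (bound := fun x : ℝ => |x|)
    (fun N => ((clampR_measurable N).aestronglyMeasurable))
    hint.abs
    (fun N => Eventually.of_forall fun x => by
      rw [Real.norm_eq_abs]; exact clampR_abs_le_abs N x)
    (Eventually.of_forall fun x => clampR_tendsto x)
  rwa [hcent] at h

/-- mgf bound for clamped noise. -/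
lemma mgf_clamp_le (μ : Measure ℝ) [IsProbabilityMeasure μ] (C : ℝ) (hC : 0 < C)
    (hT : TCI (fun a b : ℝ => |a - b|) 1 C μ) (c A : ℝ) (hcA : |c| ≤ A) (N : ℕ) :
    ∫ e, Real.exp (c * clampR N e) ∂μ
      ≤ Real.exp (A * |∫ e, clampR N e ∂μ| + A ^ 2 * C / 2) := by
  have hA0 : 0 ≤ A := le_trans (abs_nonneg c) hcA
  have hgc := gc_of_tci μ C hC hT (fun e => c * clampR N e) |c| (|c| * (N:ℝ))
    (abs_nonneg c)
    (fun a b => by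
      rw [← mul_sub, abs_mul]
      exact mul_le_mul_of_nonneg_left (clampR_lip N a b) (abs_nonneg c))
    (fun e => by
      rw [abs_mul]
      exact mul_le_mul_of_nonneg_left (clampR_abs_le N e) (abs_nonneg c))
  refine hgc.trans (Real.exp_le_exp.2 ?_)
  have h1 : ∫ e, c * clampR N e ∂μ = c * ∫ e, clampR N e ∂μ := integral_const_mul c _
  rw [h1]
  have h2 : c * ∫ e, clampR N e ∂μ ≤ A * |∫ e, clampR N e ∂μ| := by
    calc c * ∫ e, clampR N e ∂μ ≤ |c * ∫ e, clampR N e ∂μ| := le_abs_self _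
      _ = |c| * |∫ e, clampR N e ∂μ| := abs_mul _ _
      _ ≤ A * |∫ e, clampR N e ∂μ| := mul_le_mul_of_nonneg_right hcA (abs_nonneg _)
  have h3 : |c| ^ 2 * C / 2 ≤ A ^ 2 * C / 2 := by
    have : |c| ^ 2 ≤ A ^ 2 := pow_le_pow_left₀ (abs_nonneg c) hcA 2
    nlinarith
  linarith

end NBARAux
namespace NBARAux

lemma nbar_integral (f0 f1 : ℝ → ℝ) (hm0 : Measurable f0) (hm1 : Measurable f1)
    (με : Measure ℝ) [IsProbabilityMeasure με] (x : ℝ)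
    (G : ℝ → ℝ) (hG : Measurable G) (Gb : ℝ) (hGb : ∀ y, |G y| ≤ Gb) :
    ∫ yz : ℝ × ℝ, G yz.1 ∂(nbarKernel f0 f1 με x) = ∫ e, G (f0 x + e) ∂με := by
  have hφ : Measurable (fun p : ℝ × (ℝ × ℝ) => (f0 p.1 + p.2.1, f1 p.1 + p.2.2)) := by
    fun_prop
  rw [nbarKernel, Kernel.map_apply _ hφ]
  rw [integral_map (f := fun yz : ℝ × ℝ => G yz.1) hφ.aemeasurable
    ((hG.comp measurable_fst).aestronglyMeasurable)]
  rw [Kernel.prod_apply, Kernel.id_apply, Kernel.const_apply]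
  have hmeas1 : Measurable (fun p : ℝ × (ℝ × ℝ) => G (f0 p.1 + p.2.1)) := by
    exact hG.comp ((hm0.comp measurable_fst).add (measurable_fst.comp measurable_snd))
  have hint : Integrable (fun p : ℝ × (ℝ × ℝ) => G (f0 p.1 + p.2.1))
      ((Measure.dirac x).prod (με.prod με)) :=
    integrable_of_bounded' hmeas1.aestronglyMeasurable Gb (fun p => hGb _)
  rw [integral_prod _ hint, integral_dirac]
  have hmeas2 : Measurable (fun b : ℝ × ℝ => G (f0 x + b.1)) :=
    hG.comp (measurable_const.add measurable_fst)
  have hint2 : Integrable (fun b : ℝ × ℝ => G (f0 x + b.1)) (με.prod με) :=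
    integrable_of_bounded' hmeas2.aestronglyMeasurable Gb (fun p => hGb _)
  rw [integral_prod _ hint2]
  simp

lemma tree_zero : tree 0 = gen 0 := by
  ext k; simp [tree, gen, Finset.mem_Icc, Finset.mem_Ico]

lemma gen_card (m : ℕ) : (gen m).card = 2 ^ m := by
  rw [gen, Nat.card_Ico, pow_succ]; omega

lemma tree_card (m : ℕ) : (tree m).card = 2 ^ (m + 1) - 1 := by
  rw [tree, Nat.card_Icc]; omega

lemma tree_succ (m : ℕ) : tree (m + 1) = tree m ∪ gen (m + 1) := by
  have h := pow_succ 2 (m + 1)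
  have h1 : 1 ≤ 2 ^ (m + 1) := Nat.one_le_two_pow
  ext k
  simp only [tree, gen, Finset.mem_Icc, Finset.mem_Ico, Finset.mem_union]
  omega

lemma tree_disj (m : ℕ) : Disjoint (tree m) (gen (m + 1)) := by
  rw [Finset.disjoint_left]
  intro k hk1 hk2
  simp only [tree, gen, Finset.mem_Icc, Finset.mem_Ico] at hk1 hk2
  omega

lemma one_le_of_mem_gen {k m : ℕ} (h : k ∈ gen m) : 1 ≤ k := by
  simp only [gen, Finset.mem_Ico] at h
  have := Nat.one_le_two_pow (n := m)
  omega

lemma one_le_of_mem_tree {k m : ℕ} (h : k ∈ tree m) : 1 ≤ k := by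
  simp only [tree, Finset.mem_Icc] at h; exact h.1

lemma mem_tree_mono {k m : ℕ} (h : k ∈ tree m) : k ∈ tree (m + 1) := by
  simp only [tree, Finset.mem_Icc] at h ⊢
  have h2 : 2 ^ (m + 1) ≤ 2 ^ (m + 2) := Nat.pow_le_pow_right (by norm_num) (by omega)
  omega

lemma two_mul_mem_tree {k m : ℕ} (h : k ∈ tree m) : 2 * k ∈ tree (m + 1) := by
  simp only [tree, Finset.mem_Icc] at h ⊢
  have h2 : 2 ^ (m + 2) = 2 * 2 ^ (m + 1) := by ring
  omega

lemma treeSig_le {Ω E : Type*} [m0 : MeasurableSpace Ω] [MeasurableSpace E]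
    {X : ℕ → Ω → E} (hX : ∀ n, Measurable (X n)) (r : ℕ) :
    treeSig X r ≤ m0 := by
  refine iSup₂_le fun i _ => ?_
  exact MeasurableSpace.comap_le_iff_le_map.mpr fun s hs => (hX i) hs

lemma measurable_treeSig {Ω E : Type*} [MeasurableSpace Ω] [MeasurableSpace E]
    (X : ℕ → Ω → E) {r j : ℕ} (hj : j ∈ tree r) :
    Measurable[treeSig X r] (X j) := by
  rw [measurable_iff_comap_le]
  exact le_iSup₂ (f := fun (i : ℕ) (_ : i ∈ tree r) =>
    MeasurableSpace.comap (X i) inferInstance) j hj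

end NBARAux
namespace NBARAux

lemma peel {Ω : Type*} [mΩ : MeasurableSpace Ω] (Pr : Measure Ω) (X ε : ℕ → Ω → ℝ)
    (μ0 με : Measure ℝ) [IsProbabilityMeasure με]
    (f0 f1 : ℝ → ℝ) (hm0 : Measurable f0) (hm1 : Measurable f1)
    (hbmc : IsBMC Pr X μ0 (nbarKernel f0 f1 με))
    (hrec0 : ∀ k : ℕ, 1 ≤ k → ∀ ω, X (2 * k) ω = f0 (X k ω) + ε (2 * k) ω)
    (Cε : ℝ) (hCε : 0 < Cε) (hμε : TCI (fun a b : ℝ => |a - b|) 1 Cε με)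
    (hcent : ∫ e, e ∂με = 0)
    (g : ℝ → ℝ) (hg : Measurable g) (A : ℝ) (hA : ∀ u, |g u| ≤ A)
    (t : ℝ) (m : ℕ) (φ : Ω → ℝ) (hφm : StronglyMeasurable[treeSig X m] φ)
    (hφ0 : ∀ ω, 0 ≤ φ ω) (hφint : Integrable φ Pr) :
    ∫⁻ ω, ENNReal.ofReal (φ ω * ∏ k ∈ gen m, Real.exp (t * g (X k ω) * ε (2 * k) ω)) ∂Pr
      ≤ ENNReal.ofReal ((∫ ω, φ ω ∂Pr) * Real.exp (t ^ 2 * A ^ 2 * Cε / 2 * 2 ^ m)) := by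
  haveI := hbmc.isProb
  have hA0 : 0 ≤ A := (abs_nonneg _).trans (hA 0)
  have hle : treeSig X m ≤ mΩ := treeSig_le hbmc.meas m
  have hφmeas : Measurable φ := (hφm.measurable).mono hle le_rfl
  have hφaesm : AEStronglyMeasurable φ Pr := hφmeas.aestronglyMeasurable
  haveI : SigmaFinite (Pr.trim hle) := by
    have : IsFiniteMeasure (Pr.trim hle) := by
      constructor
      rw [trim_measurableSet_eq hle MeasurableSet.univ]
      exact measure_lt_top _ _
    infer_instance
  -- integrability of identity wrt με, and means of clamps
  have hidint : Integrable (fun e : ℝ => e) με := integrable_id_of_tci με Cε hCε hμε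
  set mN : ℕ → ℝ := fun N => ∫ e, clampR N e ∂με with hmNdef
  have hmN : Tendsto mN atTop (𝓝 0) := mean_clamp_tendsto με hidint hcent
  set B : ℕ → ℝ := fun N => Real.exp (|t| * A * |mN N| + t ^ 2 * A ^ 2 * Cε / 2) with hBdef
  -- the truncated functions
  set F : ℕ → ℝ × ℝ × ℝ → ℝ :=
    fun N p => Real.exp (t * g p.1 * clampR N (p.2.1 - f0 p.1)) with hFdef
  have hFmeas : ∀ N, Measurable (F N) := fun N => by
    apply Measurable.exp
    exact (measurable_const.mul (hg.comp measurable_fst)).mul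
      ((clampR_measurable N).comp
        ((measurable_fst.comp measurable_snd).sub (hm0.comp measurable_fst)))
  have hFbd : ∀ N p, |F N p| ≤ Real.exp (|t| * A * N) := fun N p => by
    rw [hFdef, abs_of_pos (Real.exp_pos _)]
    refine Real.exp_le_exp.2 ?_
    calc t * g p.1 * clampR N (p.2.1 - f0 p.1) ≤ |t * g p.1 * clampR N (p.2.1 - f0 p.1)| :=
        le_abs_self _
      _ = |t| * |g p.1| * |clampR N (p.2.1 - f0 p.1)| := by rw [abs_mul, abs_mul]
      _ ≤ |t| * A * (N : ℝ) := by
          refine mul_le_mul (mul_le_mul_of_nonneg_left (hA _) (abs_nonneg t))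
            (clampR_abs_le _ _) (abs_nonneg _) (by positivity)
  -- the truncated product
  set Z : ℕ → Ω → ℝ :=
    fun N ω => ∏ k ∈ gen m, F N (X k ω, X (2 * k) ω, X (2 * k + 1) ω) with hZdef
  have hZmeas : ∀ N, Measurable (Z N) := fun N => by
    refine Finset.measurable_prod _ fun k _ => ?_
    exact (hFmeas N).comp
      (((hbmc.meas k).prodMk ((hbmc.meas (2 * k)).prodMk (hbmc.meas (2 * k + 1)))))
  have hZnn : ∀ N ω, 0 ≤ Z N ω := fun N ω =>
    Finset.prod_nonneg fun k _ => (Real.exp_pos _).le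
  have hZbd : ∀ N ω, |Z N ω| ≤ Real.exp (|t| * A * N) ^ 2 ^ m := fun N ω => by
    rw [hZdef, abs_of_nonneg (hZnn N ω), ← gen_card m, ← Finset.prod_const]
    exact Finset.prod_le_prod (fun k _ => (Real.exp_pos _).le)
      (fun k _ => (le_abs_self _).trans (hFbd N _))
  have hZint : ∀ N, Integrable (Z N) Pr := fun N =>
    integrable_of_bounded' (hZmeas N).aestronglyMeasurable _ (hZbd N)
  have hφZint : ∀ N, Integrable (fun ω => φ ω * Z N ω) Pr := fun N => by
    have := hφint.bdd_mul (hZmeas N).aestronglyMeasurable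
      (Eventually.of_forall fun ω => by
        rw [Real.norm_eq_abs]; exact hZbd N ω)
    simpa [mul_comm] using this
  -- key bound for each truncation level
  have hkey : ∀ N : ℕ, ∫ ω, φ ω * Z N ω ∂Pr ≤ (∫ ω, φ ω ∂Pr) * B N ^ 2 ^ m := by
    intro N
    have hbr := hbmc.branch m (fun _ => F N) (fun _ => hFmeas N)
      (fun _ => ⟨Real.exp (|t| * A * N), fun p => hFbd N p⟩)
    -- the conditional expectation of Z N
    set E : Ω → ℝ := Pr[Z N | treeSig X m] with hEdef
    have hZcond : Pr[Z N | treeSig X m]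
        =ᵐ[Pr] fun ω => ∏ k ∈ gen m,
          ∫ yz : ℝ × ℝ, F N (X k ω, yz.1, yz.2) ∂(nbarKernel f0 f1 με (X k ω)) := hbr
    -- the factors are bounded by B N
    have hfac : ∀ ω, ∀ k ∈ gen m,
        ∫ yz : ℝ × ℝ, F N (X k ω, yz.1, yz.2) ∂(nbarKernel f0 f1 με (X k ω)) ≤ B N := by
      intro ω k _
      set u : ℝ := X k ω with hu
      have hGmeas : Measurable fun y : ℝ => Real.exp (t * g u * clampR N (y - f0 u)) := by
        apply Measurable.exp
        exact measurable_const.mul ((clampR_measurable N).comp (measurable_id.sub measurable_const))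
      have hGbd : ∀ y : ℝ, |Real.exp (t * g u * clampR N (y - f0 u))| ≤ Real.exp (|t| * A * N) :=
        fun y => hFbd N (u, y, 0)
      have h1 : ∫ yz : ℝ × ℝ, F N (X k ω, yz.1, yz.2) ∂(nbarKernel f0 f1 με (X k ω))
          = ∫ e, Real.exp (t * g u * clampR N (f0 u + e - f0 u)) ∂με := by
        exact nbar_integral f0 f1 hm0 hm1 με u _ hGmeas _ hGbd
      have h2 : ∀ e : ℝ, Real.exp (t * g u * clampR N (f0 u + e - f0 u))
          = Real.exp (t * g u * clampR N e) := fun e => by rw [add_sub_cancel_left]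
      rw [h1]
      simp_rw [h2]
      have h3 := mgf_clamp_le με Cε hCε hμε (t * g u) (|t| * A)
        (by rw [abs_mul]; exact mul_le_mul_of_nonneg_left (hA u) (abs_nonneg t)) N
      refine h3.trans (Real.exp_le_exp.2 ?_)
      have hsq : (|t| * A) ^ 2 = t ^ 2 * A ^ 2 := by rw [mul_pow, sq_abs]
      simp only [hsq]
      exact le_rfl
    have hfac0 : ∀ ω, ∀ k ∈ gen m,
        0 ≤ ∫ yz : ℝ × ℝ, F N (X k ω, yz.1, yz.2) ∂(nbarKernel f0 f1 με (X k ω)) := by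
      intro ω k _
      exact integral_nonneg fun yz => (Real.exp_pos _).le
    have hBnn : 0 ≤ B N := (Real.exp_pos _).le
    -- E is a.e. within [0, B N ^ 2^m]
    have hEbd : ∀ᵐ ω ∂Pr, 0 ≤ E ω ∧ E ω ≤ B N ^ 2 ^ m := by
      filter_upwards [hZcond] with ω hω
      rw [hEdef, hω]
      constructor
      · exact Finset.prod_nonneg (hfac0 ω)
      · rw [← gen_card m, ← Finset.prod_const]
        exact Finset.prod_le_prod (hfac0 ω) (hfac ω)
    -- tower property
    have hmul : Integrable (φ * Z N) Pr := by
      have := hφZint N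
      exact this.congr (Eventually.of_forall fun ω => rfl)
    have htower : ∫ ω, φ ω * Z N ω ∂Pr = ∫ ω, φ ω * E ω ∂Pr := by
      have h1 : ∫ ω, (φ * Z N) ω ∂Pr = ∫ ω, (Pr[φ * Z N | treeSig X m]) ω ∂Pr :=
        (integral_condExp hle (f := φ * Z N)).symm
      have h2 : Pr[φ * Z N | treeSig X m] =ᵐ[Pr] φ * Pr[Z N | treeSig X m] :=
        condExp_mul_of_stronglyMeasurable_left hφm hmul (hZint N)
      calc ∫ ω, φ ω * Z N ω ∂Pr = ∫ ω, (φ * Z N) ω ∂Pr := rfl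
        _ = ∫ ω, (Pr[φ * Z N | treeSig X m]) ω ∂Pr := h1
        _ = ∫ ω, (φ * Pr[Z N | treeSig X m]) ω ∂Pr := integral_congr_ae h2
        _ = ∫ ω, φ ω * E ω ∂Pr := rfl
    have hEaesm : AEStronglyMeasurable E Pr :=
      (stronglyMeasurable_condExp.mono hle).aestronglyMeasurable
    have hφEint : Integrable (fun ω => φ ω * E ω) Pr := by
      refine Integrable.mono' (hφint.mul_const (B N ^ 2 ^ m)) (hφaesm.mul hEaesm) ?_
      filter_upwards [hEbd] with ω hω
      rw [Real.norm_eq_abs, abs_mul, abs_of_nonneg (hφ0 ω), abs_of_nonneg hω.1]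
      exact mul_le_mul_of_nonneg_left hω.2 (hφ0 ω)
    rw [htower]
    calc ∫ ω, φ ω * E ω ∂Pr ≤ ∫ ω, φ ω * B N ^ 2 ^ m ∂Pr := by
          refine integral_mono_ae hφEint (hφint.mul_const _) ?_
          filter_upwards [hEbd] with ω hω
          exact mul_le_mul_of_nonneg_left hω.2 (hφ0 ω)
      _ = (∫ ω, φ ω ∂Pr) * B N ^ 2 ^ m := by rw [integral_mul_const]
  -- Fatou argument
  have hptmeas : ∀ N, Measurable fun ω => ENNReal.ofReal (φ ω * Z N ω) := fun N =>
    (hφmeas.mul (hZmeas N)).ennreal_ofReal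
  set P : Ω → ℝ := fun ω => ∏ k ∈ gen m, Real.exp (t * g (X k ω) * ε (2 * k) ω) with hPdef
  have hpt : ∀ ω, Tendsto (fun N => ENNReal.ofReal (φ ω * Z N ω)) atTop
      (𝓝 (ENNReal.ofReal (φ ω * P ω))) := by
    intro ω
    have hZP : Tendsto (fun N => Z N ω) atTop (𝓝 (P ω)) := by
      rw [hPdef]
      refine tendsto_finset_prod _ fun k hk => ?_
      have hke : X (2 * k) ω - f0 (X k ω) = ε (2 * k) ω := by
        rw [hrec0 k (one_le_of_mem_gen hk) ω]; ring
      rw [hFdef]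
      simp only
      rw [hke]
      exact (Real.continuous_exp.tendsto _).comp
        ((clampR_tendsto (ε (2 * k) ω)).const_mul _)
    exact (ENNReal.continuous_ofReal.tendsto _).comp (hZP.const_mul _)
  have hBlim : Tendsto (fun N => ENNReal.ofReal ((∫ ω, φ ω ∂Pr) * B N ^ 2 ^ m)) atTop
      (𝓝 (ENNReal.ofReal ((∫ ω, φ ω ∂Pr) * Real.exp (t ^ 2 * A ^ 2 * Cε / 2 * 2 ^ m)))) := by
    have h2 : Tendsto (fun N => |t| * A * |mN N| + t ^ 2 * A ^ 2 * Cε / 2) atTop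
        (𝓝 (t ^ 2 * A ^ 2 * Cε / 2)) := by
      have := ((hmN.abs).const_mul (|t| * A)).add_const (t ^ 2 * A ^ 2 * Cε / 2)
      simpa using this
    have h1 : Tendsto B atTop (𝓝 (Real.exp (t ^ 2 * A ^ 2 * Cε / 2))) :=
      (Real.continuous_exp.tendsto _).comp h2
    have h4 : Tendsto (fun N => B N ^ 2 ^ m) atTop
        (𝓝 (Real.exp (t ^ 2 * A ^ 2 * Cε / 2) ^ 2 ^ m)) := h1.pow _
    have h5 : Real.exp (t ^ 2 * A ^ 2 * Cε / 2) ^ 2 ^ m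
        = Real.exp (t ^ 2 * A ^ 2 * Cε / 2 * 2 ^ m) := by
      rw [mul_comm (t ^ 2 * A ^ 2 * Cε / 2) ((2:ℝ) ^ m), ← Real.exp_nat_mul]
      norm_num
    have h6 := h4.const_mul (∫ ω, φ ω ∂Pr)
    rw [h5] at h6
    exact (ENNReal.continuous_ofReal.tendsto _).comp h6
  calc ∫⁻ ω, ENNReal.ofReal (φ ω * P ω) ∂Pr
      = ∫⁻ ω, liminf (fun N => ENNReal.ofReal (φ ω * Z N ω)) atTop ∂Pr :=
        lintegral_congr fun ω => ((hpt ω).liminf_eq).symm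
    _ ≤ liminf (fun N => ∫⁻ ω, ENNReal.ofReal (φ ω * Z N ω) ∂Pr) atTop :=
        lintegral_liminf_le hptmeas
    _ ≤ liminf (fun N => ENNReal.ofReal ((∫ ω, φ ω ∂Pr) * B N ^ 2 ^ m)) atTop := by
        refine liminf_le_liminf (Eventually.of_forall fun N => ?_)
        rw [← ofReal_integral_eq_lintegral_ofReal (hφZint N)
          (Eventually.of_forall fun ω => mul_nonneg (hφ0 ω) (hZnn N ω))]
        exact ENNReal.ofReal_le_ofReal (hkey N)
    _ = ENNReal.ofReal ((∫ ω, φ ω ∂Pr) * Real.exp (t ^ 2 * A ^ 2 * Cε / 2 * 2 ^ m)) :=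
        hBlim.liminf_eq

end NBARAux
namespace NBARAux

lemma integrable_of_lintegral_le {Ω : Type*} [MeasurableSpace Ω] {Pr : Measure Ω}
    {f : Ω → ℝ} (hmeas : Measurable f) (h0 : ∀ ω, 0 ≤ f ω) {c : ℝ}
    (h : ∫⁻ ω, ENNReal.ofReal (f ω) ∂Pr ≤ ENNReal.ofReal c) : Integrable f Pr := by
  refine ⟨hmeas.aestronglyMeasurable, ?_⟩
  rw [hasFiniteIntegral_iff_ofReal (Eventually.of_forall h0)]
  exact lt_of_le_of_lt h ENNReal.ofReal_lt_top

lemma markov_exp {Ω : Type*} [MeasurableSpace Ω] (Pr : Measure Ω) (Y : Ω → ℝ)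
    (hY : Measurable Y) (a s bnd : ℝ) (hs : 0 < s)
    (hbound : ∫⁻ ω, ENNReal.ofReal (Real.exp (s * Y ω)) ∂Pr ≤ ENNReal.ofReal bnd) :
    Pr {ω | a ≤ Y ω} ≤ ENNReal.ofReal (bnd * Real.exp (-(s * a))) := by
  have hsub : {ω | a ≤ Y ω} ⊆
      {ω | ENNReal.ofReal (Real.exp (s * a)) ≤ ENNReal.ofReal (Real.exp (s * Y ω))} := by
    intro ω hω
    exact ENNReal.ofReal_le_ofReal (Real.exp_le_exp.2 (mul_le_mul_of_nonneg_left hω hs.le))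
  have h1 := mul_meas_ge_le_lintegral₀ (μ := Pr)
    (f := fun ω => ENNReal.ofReal (Real.exp (s * Y ω)))
    ((Real.measurable_exp.comp (hY.const_mul s)).ennreal_ofReal).aemeasurable
    (ENNReal.ofReal (Real.exp (s * a)))
  have h2 : Pr {ω | a ≤ Y ω}
      ≤ Pr {ω | ENNReal.ofReal (Real.exp (s * a)) ≤ ENNReal.ofReal (Real.exp (s * Y ω))} :=
    measure_mono hsub
  have hc0 : ENNReal.ofReal (Real.exp (s * a)) ≠ 0 := by
    simp [ENNReal.ofReal_eq_zero, not_le, Real.exp_pos]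
  have hct : ENNReal.ofReal (Real.exp (s * a)) ≠ ⊤ := ENNReal.ofReal_ne_top
  have h3 : Pr {ω | ENNReal.ofReal (Real.exp (s * a)) ≤ ENNReal.ofReal (Real.exp (s * Y ω))}
      ≤ ENNReal.ofReal bnd / ENNReal.ofReal (Real.exp (s * a)) := by
    rw [ENNReal.le_div_iff_mul_le (Or.inl hc0) (Or.inl hct), mul_comm]
    exact h1.trans hbound
  refine (h2.trans h3).trans_eq ?_
  rw [← ENNReal.ofReal_div_of_pos (Real.exp_pos _)]
  congr 1
  rw [Real.exp_neg, div_eq_mul_inv]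

lemma abs_le_exp_add_exp (u : ℝ) : |u| ≤ Real.exp u + Real.exp (-u) := by
  rcases abs_cases u with ⟨h1, _⟩ | ⟨h1, _⟩ <;> rw [h1] <;>
    nlinarith [Real.add_one_le_exp u, Real.add_one_le_exp (-u),
      Real.exp_pos u, Real.exp_pos (-u)]

lemma exp_sub_one_le (u : ℝ) (hu : 0 ≤ u) : Real.exp u - 1 ≤ u * Real.exp u := by
  have h1 : Real.exp (-u) * Real.exp u = 1 := by rw [← Real.exp_add]; simp
  nlinarith [Real.add_one_le_exp (-u), Real.exp_pos u]

end NBARAux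
/-- **Lemma (deviation inequality for the noise term `M_n`).** In the NBAR model, under
(NL), (No), (Ker), with `0 < α < 1`, for all `n` and `r > 0`:
`E[M_n] = 0`, `E[exp(t M_n)] ≤ exp(t² C_ε ‖K‖_∞² |𝕋_n| / 2)` for all `t`, and
`ℙ(|M_n| > r |𝕋_n| h_n) ≤ 2 exp(−r² |𝕋_n| h_n² / (2 C_ε ‖K‖_∞²))`. -/
theorem nbar_deviation_noise {Ω : Type*} [MeasurableSpace Ω]
    (Pr : Measure Ω) (X ε : ℕ → Ω → ℝ) (μ0 με : Measure ℝ) [IsProbabilityMeasure με]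
    (f0 f1 : ℝ → ℝ) (L0 L1 : ℝ)
    (hm0 : Measurable f0) (hm1 : Measurable f1)
    (hf0 : ∀ a b : ℝ, |f0 a - f0 b| ≤ L0 * |a - b|)
    (hf1 : ∀ a b : ℝ, |f1 a - f1 b| ≤ L1 * |a - b|)
    (hbmc : IsBMC Pr X μ0 (nbarKernel f0 f1 με))
    (hrec0 : ∀ k : ℕ, 1 ≤ k → ∀ ω, X (2 * k) ω = f0 (X k ω) + ε (2 * k) ω)
    (hrec1 : ∀ k : ℕ, 1 ≤ k → ∀ ω, X (2 * k + 1) ω = f1 (X k ω) + ε (2 * k + 1) ω)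
    (hεmeas : ∀ k, Measurable (ε k))
    (C0 : ℝ) (hC0 : 0 < C0) (hμ0 : TCI (fun a b : ℝ => |a - b|) 1 C0 μ0)
    (hcent : ∫ e, e ∂με = 0)
    (Cε : ℝ) (hCε : 0 < Cε) (hμε : TCI (fun a b : ℝ => |a - b|) 1 Cε με)
    (K : ℝ → ℝ) (R LK : ℝ) (hK0 : ∀ z, 0 ≤ K z)
    (hKsupp : ∀ z, z ∉ Set.Icc (-R) R → K z = 0)
    (hKlip : ∀ a b : ℝ, |K a - K b| ≤ LK * |a - b|)
    (hKint : ∫ z, K z = 1)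
    (α : ℝ) (hα0 : 0 < α)
    (h : ℕ → ℝ) (hh : ∀ n : ℕ, h n = ((2 ^ (n + 1) - 1 : ℕ) : ℝ) ^ (-α))
    (x : ℝ)
    (hα : α < 1)
    (Ksup : ℝ) (hKsup : ∀ z, |K z| ≤ Ksup)
    (M : ℕ → Ω → ℝ)
    (hM : ∀ n ω, M n ω = ∑ k ∈ tree n, K ((X k ω - x) / h n) * ε (2 * k) ω) :
    ∀ n : ℕ,
      (∫ ω, M n ω ∂Pr = 0) ∧
      (∀ t : ℝ, ∫ ω, Real.exp (t * M n ω) ∂Pr ≤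
        Real.exp (t ^ 2 * Cε * Ksup ^ 2 * ((2 ^ (n + 1) - 1 : ℕ) : ℝ) / 2)) ∧
      ∀ r : ℝ, 0 < r →
        Pr {ω | |M n ω| > r * ((2 ^ (n + 1) - 1 : ℕ) : ℝ) * h n} ≤
          ENNReal.ofReal (2 * Real.exp (-(r ^ 2 *
            ((2 ^ (n + 1) - 1 : ℕ) : ℝ) * h n ^ 2) / (2 * Cε * Ksup ^ 2))) := by
  classical
  haveI := hbmc.isProb
  -- basic positivity facts
  have hKsup0 : 0 ≤ Ksup := (abs_nonneg _).trans (hKsup 0)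
  have hKsupPos : 0 < Ksup := by
    rcases eq_or_lt_of_le hKsup0 with h0 | h
    · exfalso
      have hK0' : ∀ z, K z = 0 := fun z =>
        abs_eq_zero.mp (le_antisymm (le_of_le_of_eq (hKsup z) h0.symm) (abs_nonneg _))
      have hz : (∫ z, K z) = 0 := by
        rw [show K = fun _ : ℝ => (0:ℝ) from funext hK0']
        simp
      rw [hKint] at hz
      norm_num at hz
    · exact h
  have hKcont : Continuous K :=
    NBARAux.lipschitz_continuous (L := max LK 0) (le_max_right _ _)
      (fun a b => (hKlip a b).trans
        (mul_le_mul_of_nonneg_right (le_max_left _ _) (abs_nonneg _)))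
  intro n
  set Tn : ℝ := ((2 ^ (n + 1) - 1 : ℕ) : ℝ) with hTndef
  have hTn1 : (1:ℝ) ≤ Tn := by
    rw [hTndef]
    have h2 : 2 ^ 1 ≤ 2 ^ (n + 1) := Nat.pow_le_pow_right (by norm_num) (by omega)
    have h3 : (1:ℕ) ≤ 2 ^ (n + 1) - 1 := by omega
    exact_mod_cast h3
  have hTnpos : 0 < Tn := lt_of_lt_of_le one_pos hTn1
  set g : ℝ → ℝ := fun u => K ((u - x) / h n) with hgdef
  have hgmeas : Measurable g :=
    hKcont.measurable.comp ((measurable_id.sub_const x).div_const (h n))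
  have hgA : ∀ u, |g u| ≤ Ksup := fun u => hKsup _
  have heqM : ∀ ω, M n ω = ∑ k ∈ tree n, g (X k ω) * ε (2 * k) ω := fun ω => hM n ω
  have hSmeas : ∀ m : ℕ, Measurable fun ω => ∑ k ∈ tree m, g (X k ω) * ε (2 * k) ω :=
    fun m => Finset.measurable_sum _ fun k _ =>
      (hgmeas.comp (hbmc.meas k)).mul (hεmeas (2 * k))
  have hMmeas : Measurable (M n) := by
    rw [funext heqM]
    exact hSmeas n
  have hcast : ∀ j : ℕ, ((2 ^ (j + 1) - 1 : ℕ) : ℝ) = 2 ^ (j + 1) - 1 := fun j => by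
    rw [Nat.cast_sub Nat.one_le_two_pow]
    push_cast
    ring
  -- the main Laplace-transform claim, in lintegral form
  have hclaim : ∀ t : ℝ, ∀ m : ℕ,
      ∫⁻ ω, ENNReal.ofReal (Real.exp (t * ∑ k ∈ tree m, g (X k ω) * ε (2 * k) ω)) ∂Pr
        ≤ ENNReal.ofReal (Real.exp (t ^ 2 * Cε * Ksup ^ 2 * ((2 ^ (m + 1) - 1 : ℕ) : ℝ) / 2)) := by
    intro t m
    induction m with
    | zero =>
      have hbase := NBARAux.peel Pr X ε μ0 με f0 f1 hm0 hm1 hbmc hrec0 Cε hCε hμε hcent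
        g hgmeas Ksup hgA t 0 (fun _ => (1:ℝ)) stronglyMeasurable_const
        (fun _ => zero_le_one) (integrable_const 1)
      have hint : ∀ ω, Real.exp (t * ∑ k ∈ tree 0, g (X k ω) * ε (2 * k) ω)
          = (1:ℝ) * ∏ k ∈ gen 0, Real.exp (t * g (X k ω) * ε (2 * k) ω) := fun ω => by
        rw [one_mul, NBARAux.tree_zero, Finset.mul_sum, Real.exp_sum]
        exact Finset.prod_congr rfl fun k _ => by rw [mul_assoc]
      calc ∫⁻ ω, ENNReal.ofReal (Real.exp (t * ∑ k ∈ tree 0, g (X k ω) * ε (2 * k) ω)) ∂Pr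
          = ∫⁻ ω, ENNReal.ofReal
              ((1:ℝ) * ∏ k ∈ gen 0, Real.exp (t * g (X k ω) * ε (2 * k) ω)) ∂Pr :=
            lintegral_congr fun ω => by rw [hint ω]
        _ ≤ ENNReal.ofReal ((∫ _ω, (1:ℝ) ∂Pr) * Real.exp (t ^ 2 * Ksup ^ 2 * Cε / 2 * 2 ^ 0)) :=
            hbase
        _ = ENNReal.ofReal (Real.exp (t ^ 2 * Cε * Ksup ^ 2 * ((2 ^ (0 + 1) - 1 : ℕ) : ℝ) / 2)) := by
            congr 1
            rw [integral_const]
            simp only [Measure.real, measure_univ, ENNReal.toReal_one, one_smul]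
            rw [hcast 0]
            norm_num
            ring_nf
        _ ≤ _ := le_rfl
    | succ m ih =>
      set φ : Ω → ℝ := fun ω => Real.exp (t * ∑ k ∈ tree m, g (X k ω) * ε (2 * k) ω) with hφdef
      have hφnn : ∀ ω, 0 ≤ φ ω := fun ω => (Real.exp_pos _).le
      have hφmeas : Measurable φ := Real.measurable_exp.comp ((hSmeas m).const_mul t)
      have hφm : StronglyMeasurable[treeSig X (m + 1)] φ := by
        apply Measurable.stronglyMeasurable
        refine Real.measurable_exp.comp ?_
        refine Measurable.const_mul ?_ t
        refine Finset.measurable_sum _ fun k hk => ?_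
        have hXk : Measurable[treeSig X (m + 1)] (X k) :=
          NBARAux.measurable_treeSig X (NBARAux.mem_tree_mono hk)
        have hX2k : Measurable[treeSig X (m + 1)] (X (2 * k)) :=
          NBARAux.measurable_treeSig X (NBARAux.two_mul_mem_tree hk)
        have hεk : ε (2 * k) = fun ω => X (2 * k) ω - f0 (X k ω) := funext fun ω => by
          rw [hrec0 k (NBARAux.one_le_of_mem_tree hk) ω]; ring
        rw [hεk]
        exact (hgmeas.comp hXk).mul (hX2k.sub (hm0.comp hXk))
      have hφint : Integrable φ Pr :=
        NBARAux.integrable_of_lintegral_le hφmeas hφnn ih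
      have hsplit : ∀ ω, Real.exp (t * ∑ k ∈ tree (m + 1), g (X k ω) * ε (2 * k) ω)
          = φ ω * ∏ k ∈ gen (m + 1), Real.exp (t * g (X k ω) * ε (2 * k) ω) := fun ω => by
        rw [hφdef]
        simp only
        rw [NBARAux.tree_succ m, Finset.sum_union (NBARAux.tree_disj m), mul_add,
          Real.exp_add]
        congr 1
        rw [Finset.mul_sum, Real.exp_sum]
        exact Finset.prod_congr rfl fun k _ => by rw [mul_assoc]
      have hpeel := NBARAux.peel Pr X ε μ0 με f0 f1 hm0 hm1 hbmc hrec0 Cε hCε hμε hcent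
        g hgmeas Ksup hgA t (m + 1) φ hφm hφnn hφint
      have hφval : ∫ ω, φ ω ∂Pr
          ≤ Real.exp (t ^ 2 * Cε * Ksup ^ 2 * ((2 ^ (m + 1) - 1 : ℕ) : ℝ) / 2) := by
        rw [integral_eq_lintegral_of_nonneg_ae (Eventually.of_forall hφnn)
          hφmeas.aestronglyMeasurable]
        have h1 := ENNReal.toReal_mono ENNReal.ofReal_ne_top ih
        rwa [ENNReal.toReal_ofReal (Real.exp_pos _).le] at h1
      calc ∫⁻ ω, ENNReal.ofReal (Real.exp (t * ∑ k ∈ tree (m + 1), g (X k ω) * ε (2 * k) ω)) ∂Pr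
          = ∫⁻ ω, ENNReal.ofReal
              (φ ω * ∏ k ∈ gen (m + 1), Real.exp (t * g (X k ω) * ε (2 * k) ω)) ∂Pr :=
            lintegral_congr fun ω => by rw [hsplit ω]
        _ ≤ ENNReal.ofReal ((∫ ω, φ ω ∂Pr) * Real.exp (t ^ 2 * Ksup ^ 2 * Cε / 2 * 2 ^ (m + 1))) :=
            hpeel
        _ ≤ ENNReal.ofReal (Real.exp (t ^ 2 * Cε * Ksup ^ 2 * ((2 ^ (m + 1) - 1 : ℕ) : ℝ) / 2)
              * Real.exp (t ^ 2 * Ksup ^ 2 * Cε / 2 * 2 ^ (m + 1))) := by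
            exact ENNReal.ofReal_le_ofReal
              (mul_le_mul_of_nonneg_right hφval (Real.exp_pos _).le)
        _ = ENNReal.ofReal (Real.exp (t ^ 2 * Cε * Ksup ^ 2 * ((2 ^ (m + 1 + 1) - 1 : ℕ) : ℝ) / 2)) := by
            congr 1
            rw [← Real.exp_add]
            congr 1
            rw [hcast m, hcast (m + 1)]
            ring
  -- Part 2: Bochner form of the Laplace bound
  have hexp_lint : ∀ t : ℝ,
      ∫⁻ ω, ENNReal.ofReal (Real.exp (t * M n ω)) ∂Pr
        ≤ ENNReal.ofReal (Real.exp (t ^ 2 * Cε * Ksup ^ 2 * Tn / 2)) := by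
    intro t
    calc ∫⁻ ω, ENNReal.ofReal (Real.exp (t * M n ω)) ∂Pr
        = ∫⁻ ω, ENNReal.ofReal (Real.exp (t * ∑ k ∈ tree n, g (X k ω) * ε (2 * k) ω)) ∂Pr :=
          lintegral_congr fun ω => by rw [heqM ω]
      _ ≤ _ := hclaim t n
  have hexpint : ∀ t : ℝ, Integrable (fun ω => Real.exp (t * M n ω)) Pr := fun t =>
    NBARAux.integrable_of_lintegral_le (Real.measurable_exp.comp (hMmeas.const_mul t))
      (fun ω => (Real.exp_pos _).le) (hexp_lint t)
  have hpart2 : ∀ t : ℝ, ∫ ω, Real.exp (t * M n ω) ∂Pr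
      ≤ Real.exp (t ^ 2 * Cε * Ksup ^ 2 * Tn / 2) := by
    intro t
    rw [integral_eq_lintegral_of_nonneg_ae (Eventually.of_forall fun ω => (Real.exp_pos _).le)
      (Real.measurable_exp.comp (hMmeas.const_mul t)).aestronglyMeasurable]
    have h1 := ENNReal.toReal_mono ENNReal.ofReal_ne_top (hexp_lint t)
    rwa [ENNReal.toReal_ofReal (Real.exp_pos _).le] at h1
  -- Part 1: centering
  have hMint : Integrable (M n) Pr := by
    refine Integrable.mono' ((hexpint 1).add (hexpint (-1))) hMmeas.aestronglyMeasurable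
      (Eventually.of_forall fun ω => ?_)
    rw [Real.norm_eq_abs]
    have := NBARAux.abs_le_exp_add_exp (M n ω)
    simpa using this
  set c₀ : ℝ := Cε * Ksup ^ 2 * Tn with hc₀def
  have hc₀pos : 0 < c₀ := by
    rw [hc₀def]; positivity
  set EM : ℝ := ∫ ω, M n ω ∂Pr with hEMdef
  have hboth : ∀ s : ℝ, s ^ 2 ≤ 1 → s * EM ≤ s ^ 2 * (c₀ / 2 * Real.exp (c₀ / 2)) := by
    intro s hs1
    set u : ℝ := s ^ 2 * Cε * Ksup ^ 2 * Tn / 2 with hudef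
    have hu0 : 0 ≤ u := by rw [hudef]; positivity
    have huc : u ≤ c₀ / 2 := by
      rw [hudef, hc₀def]
      nlinarith [mul_pos (mul_pos hCε (pow_pos hKsupPos 2)) hTnpos]
    have h2 : ∫ ω, (1 + s * M n ω) ∂Pr = 1 + s * EM := by
      rw [integral_add (integrable_const 1) (hMint.const_mul s), integral_const,
        integral_const_mul, hEMdef]
      simp
    have h3 : ∫ ω, (1 + s * M n ω) ∂Pr ≤ ∫ ω, Real.exp (s * M n ω) ∂Pr := by
      refine integral_mono ((integrable_const 1).add (hMint.const_mul s)) (hexpint s)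
        fun ω => ?_
      have := Real.add_one_le_exp (s * M n ω)
      linarith
    have h4 : s * EM ≤ Real.exp u - 1 := by
      have := (h2 ▸ h3).trans (hpart2 s)
      rw [hudef] at *
      linarith
    have h5 : Real.exp u - 1 ≤ u * Real.exp u := NBARAux.exp_sub_one_le u hu0
    have h6 : u * Real.exp u ≤ (s ^ 2 * (c₀ / 2)) * Real.exp (c₀ / 2) := by
      have hs2 : u ≤ s ^ 2 * (c₀ / 2) := by
        rw [hudef, hc₀def]; ring_nf; exact le_rfl
      have hee : Real.exp u ≤ Real.exp (c₀ / 2) := Real.exp_le_exp.2 huc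
      nlinarith [Real.exp_pos u, Real.exp_pos (c₀ / 2)]
    calc s * EM ≤ u * Real.exp u := h4.trans h5
      _ ≤ s ^ 2 * (c₀ / 2 * Real.exp (c₀ / 2)) := by
          refine h6.trans (le_of_eq ?_); ring
  set D : ℝ := c₀ / 2 * Real.exp (c₀ / 2) with hDdef
  have hDpos : 0 < D := by rw [hDdef]; positivity
  have habs : ∀ t : ℝ, 0 < t → t ≤ 1 → |EM| ≤ t * D := by
    intro t ht0 ht1
    have hsq : t ^ 2 ≤ 1 := by nlinarith
    have h1 := hboth t hsq
    have h2 := hboth (-t) (by rwa [neg_sq])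
    rw [neg_sq, neg_mul] at h2
    rw [abs_le]
    constructor
    · -- -(t * D) ≤ EM
      have h3 : t * (-EM) ≤ t * (t * D) := by nlinarith
      have h4 : -EM ≤ t * D := (mul_le_mul_iff_of_pos_left ht0).mp h3
      linarith
    · have h3 : t * EM ≤ t * (t * D) := by nlinarith
      exact (mul_le_mul_iff_of_pos_left ht0).mp h3
  have hEM0 : EM = 0 := by
    by_contra hne
    have hpos : 0 < |EM| := abs_pos.mpr hne
    set t : ℝ := min 1 (|EM| / (2 * D)) with htdef
    have ht0 : 0 < t := lt_min one_pos (by positivity)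
    have ht1 : t ≤ 1 := min_le_left _ _
    have h1 := habs t ht0 ht1
    have h2 : t * D ≤ |EM| / (2 * D) * D := by
      exact mul_le_mul_of_nonneg_right (min_le_right _ _) hDpos.le
    have h3 : |EM| / (2 * D) * D = |EM| / 2 := by
      field_simp
    rw [h3] at h2
    linarith
  refine ⟨hEM0, hpart2, ?_⟩
  -- Part 3: the deviation inequality
  intro r hr
  have hhn : 0 < h n := by
    rw [hh n]
    refine Real.rpow_pos_of_pos ?_ _
    exact hTnpos
  set a : ℝ := r * Tn * h n with hadef
  have hapos : 0 < a := by rw [hadef]; positivity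
  set s : ℝ := a / c₀ with hsdef
  have hspos : 0 < s := div_pos hapos hc₀pos
  set q : ℝ := Real.exp (s ^ 2 * Cε * Ksup ^ 2 * Tn / 2) * Real.exp (-(s * a)) with hqdef
  have hbound1 : Pr {ω | a ≤ M n ω} ≤ ENNReal.ofReal q :=
    NBARAux.markov_exp Pr (M n) hMmeas a s _ hspos (hexp_lint s)
  have hbound2 : Pr {ω | a ≤ -(M n ω)} ≤ ENNReal.ofReal q := by
    have hlint : ∫⁻ ω, ENNReal.ofReal (Real.exp (s * -(M n ω))) ∂Pr
        ≤ ENNReal.ofReal (Real.exp (s ^ 2 * Cε * Ksup ^ 2 * Tn / 2)) := by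
      have h1 : ∀ ω, Real.exp (s * -(M n ω)) = Real.exp ((-s) * M n ω) := fun ω => by
        ring_nf
      calc ∫⁻ ω, ENNReal.ofReal (Real.exp (s * -(M n ω))) ∂Pr
          = ∫⁻ ω, ENNReal.ofReal (Real.exp ((-s) * M n ω)) ∂Pr :=
            lintegral_congr fun ω => by rw [h1 ω]
        _ ≤ ENNReal.ofReal (Real.exp ((-s) ^ 2 * Cε * Ksup ^ 2 * Tn / 2)) := hexp_lint (-s)
        _ = _ := by rw [neg_sq]
    exact NBARAux.markov_exp Pr (fun ω => -(M n ω)) hMmeas.neg a s _ hspos hlint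
  have hsubset : {ω | |M n ω| > a} ⊆ {ω | a ≤ M n ω} ∪ {ω | a ≤ -(M n ω)} := by
    intro ω hω
    have : a < |M n ω| := hω
    rcases lt_abs.mp this with h | h
    · exact Or.inl h.le
    · exact Or.inr h.le
  have hq : q = Real.exp (-(r ^ 2 * Tn * h n ^ 2) / (2 * Cε * Ksup ^ 2)) := by
    rw [hqdef, ← Real.exp_add]
    congr 1
    have hsc : s * c₀ = a := by
      rw [hsdef]
      field_simp
    have e1 : s ^ 2 * Cε * Ksup ^ 2 * Tn / 2 + -(s * a) = -(s * a) / 2 := by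
      have : s ^ 2 * Cε * Ksup ^ 2 * Tn / 2 = s * (s * c₀) / 2 := by
        rw [hc₀def]; ring
      rw [this, hsc]; ring
    rw [e1]
    have e2 : s * a = a * a / c₀ := by
      rw [hsdef]; ring
    rw [e2, hadef, hc₀def]
    have hTne : Tn ≠ 0 := hTnpos.ne'
    have hCne : Cε ≠ 0 := hCε.ne'
    have hKne : Ksup ≠ 0 := hKsupPos.ne'
    field_simp
  calc Pr {ω | |M n ω| > a}
      ≤ Pr ({ω | a ≤ M n ω} ∪ {ω | a ≤ -(M n ω)}) := measure_mono hsubset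
    _ ≤ Pr {ω | a ≤ M n ω} + Pr {ω | a ≤ -(M n ω)} := measure_union_le _ _
    _ ≤ ENNReal.ofReal q + ENNReal.ofReal q := add_le_add hbound1 hbound2
    _ = ENNReal.ofReal (2 * Real.exp (-(r ^ 2 * Tn * h n ^ 2) / (2 * Cε * Ksup ^ 2))) := by
        rw [← ENNReal.ofReal_add (by rw [hqdef]; positivity) (by rw [hqdef]; positivity), hq]
        congr 1
        ring

end
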